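/- Let n ≥ 2 and write det(xI − M) = x^{n+1} + a_1 x^n + … + a_{n−1} x² + a_n x (the constant term vanishes). Then (−1)^n a_n = (7n+3)/25 · (1/7)^{n−1}; equivalently, the coefficient of x^1 in the characteristic polynomial of M equals (−1)^n · (7n+3)/(25 · 7^{n−1}), i.e., the sum of all n×n principal minors of M equals (7n+3)/(25 · 7^{n−1}). -/

import Mathlib

/-!
`xI - M` is tridiagonal, so expanding its determinant along the last row gives the three-term
continuant recurrence. The leading principal minors `P_k`, `k ≤ n`, do not see the modified last
corner of `M`; they satisfy `P_{k+3} = (x - 2/7) P_{k+2} - P_{k+1} / 49`, and the two lowest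
coefficients of `P_k` have closed forms proved by induction. One more expansion gives
`det (xI - M) = (x - 1/5) P_n - P_{n-1} / 35`, whose coefficient of `x` is then explicit.
-/

/-- The tridiagonal matrix `M` (of size `(n+1) × (n+1)`). -/
noncomputable def Mmat (n : ℕ) : Matrix (Fin (n+1)) (Fin (n+1)) ℝ :=
  Matrix.of fun i j =>
    if i = j then (if i.val = 0 ∨ i.val = n then 1/5 else 2/7)
    else if i.val + 1 = j.val ∨ j.val + 1 = i.val then
      (if min i.val j.val = 0 ∨ max i.val j.val = n then -(1/Real.sqrt 35) else -(1/7))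
    else 0

open Polynomial

namespace Matrix

variable {R : Type*} [CommRing R]

def tridiagonal (k : ℕ) (d u l : ℕ → R) : Matrix (Fin k) (Fin k) R :=
  of fun i j =>
    if (i : ℕ) = j then d i
    else if (i : ℕ) + 1 = j then u i
    else if (j : ℕ) + 1 = i then l j
    else 0

section tridiagonal

variable {k : ℕ} (d u l : ℕ → R)

theorem tridiagonal_apply_self (i : Fin k) : tridiagonal k d u l i i = d i := by
  simp [tridiagonal]

theorem tridiagonal_apply_of_succ_eq {i j : Fin k} (h : (i : ℕ) + 1 = j) :
    tridiagonal k d u l i j = u i := by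
  simp only [tridiagonal, of_apply]
  rw [if_neg (by omega), if_pos h]

theorem tridiagonal_apply_of_eq_succ {i j : Fin k} (h : (i : ℕ) = j + 1) :
    tridiagonal k d u l i j = l j := by
  simp only [tridiagonal, of_apply]
  rw [if_neg (by omega), if_neg (by omega), if_pos h.symm]

theorem tridiagonal_apply_of_succ_lt {i j : Fin k} (h : (i : ℕ) + 1 < j) :
    tridiagonal k d u l i j = 0 := by
  simp only [tridiagonal, of_apply]
  rw [if_neg (by omega), if_neg (by omega), if_neg (by omega)]

theorem tridiagonal_apply_of_succ_lt' {i j : Fin k} (h : (j : ℕ) + 1 < i) :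
    tridiagonal k d u l i j = 0 := by
  simp only [tridiagonal, of_apply]
  rw [if_neg (by omega), if_neg (by omega), if_neg (by omega)]

@[simp]
theorem tridiagonal_submatrix_castSucc :
    (tridiagonal (k + 1) d u l).submatrix Fin.castSucc Fin.castSucc = tridiagonal k d u l := by
  ext i j
  simp [tridiagonal]

end tridiagonal

theorem tridiagonal_congr {k : ℕ} {d u l d' u' l' : ℕ → R} (hd : ∀ i < k, d i = d' i)
    (hu : ∀ i, i + 1 < k → u i = u' i) (hl : ∀ i, i + 1 < k → l i = l' i) :
    tridiagonal k d u l = tridiagonal k d' u' l' := by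
  ext i j
  simp only [tridiagonal, of_apply]
  split_ifs
  · exact hd i i.isLt
  · exact hu i (by omega)
  · exact hl j (by omega)
  · rfl

theorem det_tridiagonal_add_two (k : ℕ) (d u l : ℕ → R) :
    (tridiagonal (k + 2) d u l).det =
      d (k + 1) * (tridiagonal (k + 1) d u l).det - u k * l k * (tridiagonal k d u l).det := by
  let p : Fin (k + 2) := (Fin.last k).castSucc
  have hp : ∀ i : Fin k, p.succAbove i.castSucc = i.castSucc.castSucc :=
    fun i => Fin.succAbove_of_castSucc_lt _ _ (by simp [p, Fin.lt_def])
  have hp_last : p.succAbove (Fin.last k) = Fin.last (k + 1) :=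
    Fin.succAbove_of_le_castSucc _ _ le_rfl
  -- the minor of the subdiagonal entry `l k` has `u k` as the only nonzero entry of its last column
  have hminor : ((tridiagonal (k + 2) d u l).submatrix Fin.castSucc p.succAbove).det =
      u k * (tridiagonal k d u l).det := by
    have hsub : ((tridiagonal (k + 2) d u l).submatrix Fin.castSucc p.succAbove).submatrix
        Fin.castSucc Fin.castSucc = tridiagonal k d u l := by
      ext i j
      simp [hp, tridiagonal]
    rw [det_succ_column _ (Fin.last k), Fin.sum_univ_castSucc, Finset.sum_eq_zero,
      Fin.succAbove_last, hsub]
    · simp [hp_last, p, tridiagonal_apply_of_succ_eq]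
    · intro i _
      rw [submatrix_apply, hp_last, tridiagonal_apply_of_succ_lt _ _ _ (by simp)]
      simp
  rw [det_succ_row _ (Fin.last _), Fin.sum_univ_castSucc, Fin.sum_univ_castSucc, Finset.sum_eq_zero,
    Fin.succAbove_last, hminor, tridiagonal_submatrix_castSucc, tridiagonal_apply_self,
    tridiagonal_apply_of_eq_succ _ _ _ (by simp)]
  · simp only [Fin.val_last, Fin.val_castSucc, zero_add]
    rw [Even.neg_one_pow ⟨k + 1, rfl⟩, Odd.neg_one_pow ⟨k, by ring⟩]
    ring
  · intro i _
    rw [tridiagonal_apply_of_succ_lt' _ _ _ (by simp)]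
    simp

end Matrix

open Matrix

theorem C_one_div_sqrt_mul_self {a : ℝ} (ha : 0 ≤ a) :
    (C (1 / √a) * C (1 / √a) : ℝ[X]) = C (1 / a) := by
  rw [← C_mul, div_mul_div_comm, one_mul, Real.mul_self_sqrt ha]

noncomputable def pathDiag (i : ℕ) : ℝ[X] := X - C (if i = 0 then 1/5 else 2/7)

noncomputable def pathOffDiag (i : ℕ) : ℝ[X] := C (if i = 0 then 1 / √35 else 1/7)

noncomputable def pathMinor (k : ℕ) : ℝ[X] :=
  (tridiagonal k pathDiag pathOffDiag pathOffDiag).det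

theorem charmatrix_Mmat (n : ℕ) :
    charmatrix (Mmat n) =
      tridiagonal (n + 1) (Function.update pathDiag n (X - C (1/5)))
        (Function.update pathOffDiag (n - 1) (C (1 / √35)))
        (Function.update pathOffDiag (n - 1) (C (1 / √35))) := by
  ext i j : 1
  rcases eq_or_ne i j with rfl | hij
  · rw [charmatrix_apply_eq, tridiagonal_apply_self]
    simp only [Mmat, of_apply, if_true, Function.update_apply, pathDiag]
    split_ifs <;> simp_all
  · rw [charmatrix_apply_ne _ _ _ hij]
    simp only [Mmat, of_apply, if_neg hij, tridiagonal, Fin.val_eq_val, Function.update_apply,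
      pathOffDiag]
    split_ifs <;> first | omega | simp

theorem pathMinor_one : pathMinor 1 = X - C (1/5) := by
  simp [pathMinor, tridiagonal_apply_self, pathDiag]

theorem pathMinor_two : pathMinor 2 = (X - C (2/7)) * (X - C (1/5)) - C (1/35) := by
  rw [pathMinor, det_tridiagonal_add_two, ← pathMinor, pathMinor_one, pathDiag, pathOffDiag,
    if_neg (by omega), if_pos rfl, C_one_div_sqrt_mul_self (by norm_num), det_isEmpty, mul_one]

theorem pathMinor_add_three (k : ℕ) :
    pathMinor (k + 3) = (X - C (2/7)) * pathMinor (k + 2) - C (1/49) * pathMinor (k + 1) := by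
  rw [pathMinor, det_tridiagonal_add_two, ← pathMinor, ← pathMinor, pathDiag, pathOffDiag,
    if_neg (by omega), if_neg (by omega), ← C_mul]
  norm_num

theorem charpoly_Mmat_succ (m : ℕ) :
    (Mmat (m + 1)).charpoly = (X - C (1/5)) * pathMinor (m + 1) - C (1/35) * pathMinor m := by
  rw [Matrix.charpoly, charmatrix_Mmat, det_tridiagonal_add_two, Nat.add_sub_cancel,
    Function.update_self, Function.update_self, C_one_div_sqrt_mul_self (by norm_num),
    tridiagonal_congr (d' := pathDiag) (u' := pathOffDiag) (l' := pathOffDiag),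
    tridiagonal_congr (k := m) (d' := pathDiag) (u' := pathOffDiag) (l' := pathOffDiag)]
  · rfl
  all_goals intro i hi; exact Function.update_of_ne (by omega) _ _

theorem coeff_zero_pathMinor_succ :
    ∀ k : ℕ, (pathMinor (k + 1)).coeff 0 = -(1/5) * (-1/7) ^ k
  | 0 => by simp [pathMinor_one]
  | 1 => by norm_num [pathMinor_two, mul_coeff_zero]
  | k + 2 => by
    rw [pathMinor_add_three, coeff_sub, mul_coeff_zero, coeff_C_mul, coeff_zero_pathMinor_succ k,
      coeff_zero_pathMinor_succ (k + 1)]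
    simp only [coeff_sub, coeff_X_zero, coeff_C_zero]
    ring

theorem coeff_one_pathMinor_succ :
    ∀ k : ℕ, (pathMinor (k + 1)).coeff 1 = (k + 1) * (7 * k + 10) / 10 * (-1/7) ^ k
  | 0 => by norm_num [pathMinor_one, coeff_X, coeff_C]
  | 1 => by norm_num [pathMinor_two, coeff_X_sub_C_mul (a := 0), coeff_X, coeff_C]
  | k + 2 => by
    rw [pathMinor_add_three, coeff_sub, coeff_X_sub_C_mul (a := 0), coeff_C_mul,
      coeff_zero_pathMinor_succ, coeff_one_pathMinor_succ k, coeff_one_pathMinor_succ (k + 1)]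
    push_cast
    ring

theorem neg_one_pow_mul_charpoly_coeff_one_Mmat (n : ℕ) (hn : 2 ≤ n) :
    (-1 : ℝ)^n * (Mmat n).charpoly.coeff 1 = (7 * (n : ℝ) + 3) / 25 * (1/7)^(n-1) := by
  obtain ⟨m, rfl⟩ : ∃ m, n = m + 2 := ⟨n - 2, by omega⟩
  have hsign : (-1 : ℝ) ^ m * (-1/7) ^ m = (1/7) ^ m := by rw [← mul_pow]; norm_num
  rw [charpoly_Mmat_succ, coeff_sub, coeff_X_sub_C_mul (a := 0), coeff_C_mul,
    coeff_zero_pathMinor_succ, coeff_one_pathMinor_succ, coeff_one_pathMinor_succ,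
    show m + 2 - 1 = m + 1 by omega]
  push_cast
  linear_combination (7 * (m : ℝ) + 17) / 175 * hsign
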